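/- arXiv:1108.6282 — 2 statements merged into one kernel-verified Lean document; each statement's English description precedes it below -/
import Mathlib

section
/- Let H be a Hilbert space, (g_i) a Bessel sequence in H with bound B, and (f_i) a sequence in H such that g = Σᵢ ⟨g, fᵢ⟩ gᵢ for every g ∈ H. Then (f_i) satisfies the lower frame condition with bound 1/B: for every g ∈ H with Σᵢ |⟨g, fᵢ⟩|² < ∞, one has (1/B)‖g‖² ≤ Σᵢ |⟨g, fᵢ⟩|². -/
/-!
Pairing the reconstruction `h = Σᵢ ⟨h, Fᵢ⟩ gᵢ` with `h` gives `‖h‖² = Σᵢ ⟨h, Fᵢ⟩ ⟨h, gᵢ⟩`, so by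
Cauchy–Schwarz in `ℓ²` and the Bessel bound, `‖h‖⁴ ≤ (Σᵢ ⟨h, Fᵢ⟩²) · B ‖h‖²`.
-/

open scoped RealInnerProductSpace
open Filter Topology Finset

theorem tendsto_sum_mul_inner_of_tendsto_sum_smul {𝕜 E : Type*} [RCLike 𝕜]
    [SeminormedAddCommGroup E] [InnerProductSpace 𝕜 E] {c : ℕ → 𝕜} {g : ℕ → E} {x : E}
    (hx : Tendsto (fun n => ∑ i ∈ range n, c i • g i) atTop (𝓝 x)) (y : E) :
    Tendsto (fun n => ∑ i ∈ range n, c i * inner 𝕜 y (g i)) atTop (𝓝 (inner 𝕜 y x)) := by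
  simpa only [inner_sum, inner_smul_right] using (tendsto_const_nhds (x := y)).inner (𝕜 := 𝕜) hx

theorem sq_sum_mul_le_tsum_sq_mul_tsum_sq {ι : Type*} {a b : ι → ℝ}
    (ha : Summable fun i => a i ^ 2) (hb : Summable fun i => b i ^ 2) (s : Finset ι) :
    (∑ i ∈ s, a i * b i) ^ 2 ≤ (∑' i, a i ^ 2) * ∑' i, b i ^ 2 :=
  (sum_mul_sq_le_sq_mul_sq s a b).trans <|
    mul_le_mul (ha.sum_le_tsum s fun _ _ => sq_nonneg _) (hb.sum_le_tsum s fun _ _ => sq_nonneg _)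
      (sum_nonneg fun _ _ => sq_nonneg _) (tsum_nonneg fun _ => sq_nonneg _)

theorem sq_le_tsum_sq_mul_tsum_sq_of_tendsto {a b : ℕ → ℝ} {L : ℝ}
    (ha : Summable fun i => a i ^ 2) (hb : Summable fun i => b i ^ 2)
    (hL : Tendsto (fun n => ∑ i ∈ range n, a i * b i) atTop (𝓝 L)) :
    L ^ 2 ≤ (∑' i, a i ^ 2) * ∑' i, b i ^ 2 :=
  le_of_tendsto' (hL.pow 2) fun _ => sq_sum_mul_le_tsum_sq_mul_tsum_sq ha hb _

theorem one_div_mul_le_of_sq_le_mul {a B T : ℝ} (ha : 0 ≤ a) (hT : 0 ≤ T)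
    (h : a ^ 2 ≤ T * (B * a)) : 1 / B * a ≤ T := by
  rcases le_or_gt B 0 with hB | hB
  · exact (mul_nonpos_of_nonpos_of_nonneg (one_div_nonpos.2 hB) ha).trans hT
  · rw [one_div_mul_eq_div, div_le_iff₀ hB]
    rcases ha.eq_or_lt with rfl | ha
    · positivity
    · nlinarith

theorem stmt_6_general (H : Type*) [NormedAddCommGroup H] [InnerProductSpace ℝ H]
    (g F : ℕ → H) (B : ℝ)
    (hBessel : ∀ f : H, Summable (fun i => ⟪f, g i⟫ ^ 2) ∧ ∑' i, ⟪f, g i⟫ ^ 2 ≤ B * ‖f‖ ^ 2)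
    (hexp : ∀ x : H, Filter.Tendsto (fun n => ∑ i ∈ Finset.range n, ⟪x, F i⟫ • g i)
      Filter.atTop (nhds x)) :
    ∀ h : H, Summable (fun i => ⟪h, F i⟫ ^ 2) →
      (1 / B) * ‖h‖ ^ 2 ≤ ∑' i, ⟪h, F i⟫ ^ 2 := by
  intro h hF
  obtain ⟨hg, hgB⟩ := hBessel h
  have hpair := tendsto_sum_mul_inner_of_tendsto_sum_smul (hexp h) h
  rw [real_inner_self_eq_norm_sq] at hpair
  have hCS := sq_le_tsum_sq_mul_tsum_sq_of_tendsto hF hg hpair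
  exact one_div_mul_le_of_sq_le_mul (sq_nonneg _) (tsum_nonneg fun _ => sq_nonneg _) <|
    hCS.trans (mul_le_mul_of_nonneg_left hgB (tsum_nonneg fun _ => sq_nonneg _))

/-- If `(gᵢ)` is Bessel with bound `B` and `g = Σᵢ ⟨g, fᵢ⟩ gᵢ` for all `g`, then `(fᵢ)`
satisfies the lower frame condition with bound `1/B`. -/
theorem stmt_6 (H : Type*) [NormedAddCommGroup H] [InnerProductSpace ℝ H]
    (g F : ℕ → H) (B : ℝ) (hB : 0 < B)
    (hBessel : ∀ f : H, Summable (fun i => ⟪f, g i⟫ ^ 2) ∧ ∑' i, ⟪f, g i⟫ ^ 2 ≤ B * ‖f‖ ^ 2)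
    (hexp : ∀ x : H, Filter.Tendsto (fun n => ∑ i ∈ Finset.range n, ⟪x, F i⟫ • g i)
      Filter.atTop (nhds x)) :
    ∀ h : H, Summable (fun i => ⟪h, F i⟫ ^ 2) →
      (1 / B) * ‖h‖ ^ 2 ≤ ∑' i, ⟪h, F i⟫ ^ 2 :=
  stmt_6_general H g F B hBessel hexp
end

section
/- Let H be a Hilbert space, (g_i) a frame for H, and V : H → H a bounded operator. Then (V g_i) is a frame for H if and only if V is surjective. -/
open scoped RealInnerProductSpace

/-!
`(V gᵢ)` is a frame exactly when `V†` is bounded below, because `⟪f, V gᵢ⟫ = ⟪V† f, gᵢ⟫`: the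
frame sums of `(V gᵢ)` at `f` are those of `(gᵢ)` at `V† f`, hence comparable to `‖V† f‖²`.
An operator whose adjoint is bounded below is onto: `V V†` is then coercive, so it is onto by
Lax–Milgram. Conversely, by the open mapping theorem every `y` has a preimage `x` with
`‖x‖ ≤ C ‖y‖`, and `‖f‖² = ⟪V† f, x⟫ ≤ C ‖V† f‖ ‖f‖` for a preimage `x` of `f`.
-/

section

open ContinuousLinearMap

variable {ι H K : Type*} [NormedAddCommGroup H] [InnerProductSpace ℝ H]
  [NormedAddCommGroup K] [InnerProductSpace ℝ K]

def IsFrame (g : ι → H) : Prop :=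
  ∃ A B : ℝ, 0 < A ∧ 0 < B ∧ ∀ f : H, Summable (fun i => ⟪f, g i⟫ ^ 2) ∧
    A * ‖f‖ ^ 2 ≤ ∑' i, ⟪f, g i⟫ ^ 2 ∧ ∑' i, ⟪f, g i⟫ ^ 2 ≤ B * ‖f‖ ^ 2

variable [CompleteSpace H] [CompleteSpace K]

namespace ContinuousLinearMap

theorem surjective_of_mul_norm_le_norm_adjoint (V : H →L[ℝ] K) {c : ℝ} (hc : 0 < c)
    (h : ∀ f, c * ‖f‖ ≤ ‖adjoint V f‖) : Function.Surjective V := by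
  set T : K →L[ℝ] K := V ∘L adjoint V
  have hcoercive : IsCoercive ((innerSL ℝ) ∘L T) := by
    refine ⟨c ^ 2, by positivity, fun u => ?_⟩
    have hTu : ⟪T u, u⟫ = ‖adjoint V u‖ ^ 2 := by
      rw [comp_apply, real_inner_comm, ← adjoint_inner_left, real_inner_self_eq_norm_sq]
    calc c ^ 2 * ‖u‖ * ‖u‖ = (c * ‖u‖) ^ 2 := by ring
      _ ≤ ‖adjoint V u‖ ^ 2 := pow_le_pow_left₀ (by positivity) (h u) 2
      _ = ⟪T u, u⟫ := hTu.symm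
  have hsharp : InnerProductSpace.continuousLinearMapOfBilin ((innerSL ℝ) ∘L T) = T :=
    ext fun u => ext_inner_right ℝ fun w =>
      InnerProductSpace.continuousLinearMapOfBilin_apply _ u w
  intro y
  obtain ⟨u, hu⟩ := LinearMap.range_eq_top.1 hcoercive.range_eq_top y
  rw [hsharp] at hu
  exact ⟨adjoint V u, hu⟩

theorem exists_mul_norm_le_norm_adjoint_of_surjective (V : H →L[ℝ] K)
    (hV : Function.Surjective V) : ∃ c > 0, ∀ f, c * ‖f‖ ≤ ‖adjoint V f‖ := by
  obtain ⟨C, hC, hpreimage⟩ := V.exists_preimage_norm_le hV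
  refine ⟨C⁻¹, inv_pos.2 hC, fun f => ?_⟩
  obtain ⟨x, rfl, hx⟩ := hpreimage f
  rw [inv_mul_le_iff₀ hC]
  rcases (norm_nonneg (V x)).eq_or_lt with hzero | hpos
  · rw [← hzero]
    positivity
  refine le_of_mul_le_mul_right ?_ hpos
  calc ‖V x‖ * ‖V x‖ = ⟪adjoint V (V x), x⟫ := by
        rw [adjoint_inner_left, real_inner_self_eq_norm_mul_norm]
    _ ≤ ‖adjoint V (V x)‖ * ‖x‖ := real_inner_le_norm _ _
    _ ≤ ‖adjoint V (V x)‖ * (C * ‖V x‖) := by gcongr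
    _ = C * ‖adjoint V (V x)‖ * ‖V x‖ := by ring

theorem surjective_iff_exists_mul_norm_le_norm_adjoint (V : H →L[ℝ] K) :
    Function.Surjective V ↔ ∃ c > 0, ∀ f, c * ‖f‖ ≤ ‖adjoint V f‖ :=
  ⟨V.exists_mul_norm_le_norm_adjoint_of_surjective,
    fun ⟨_, hc, h⟩ => V.surjective_of_mul_norm_le_norm_adjoint hc h⟩

end ContinuousLinearMap

theorem IsFrame.comp_iff {g : ι → H} (hg : IsFrame g) (V : H →L[ℝ] K) :
    IsFrame (fun i => V (g i)) ↔ ∃ c > 0, ∀ f, c * ‖f‖ ≤ ‖adjoint V f‖ := by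
  obtain ⟨A, B, hA, hB, hbounds⟩ := hg
  have hcoeff : ∀ f, (fun i => ⟪f, V (g i)⟫ ^ 2) = fun i => ⟪adjoint V f, g i⟫ ^ 2 :=
    fun f => funext fun i => by rw [adjoint_inner_left]
  constructor
  · rintro ⟨A', _, hA', -, hbounds'⟩
    refine ⟨√(A' / B), by positivity, fun f => ?_⟩
    refine (pow_le_pow_iff_left₀ (by positivity) (norm_nonneg _) two_ne_zero).1 ?_
    have hlower := (hbounds' f).2.1
    rw [hcoeff] at hlower
    rw [mul_pow, Real.sq_sqrt (by positivity), div_mul_eq_mul_div, div_le_iff₀ hB]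
    linarith [(hbounds (adjoint V f)).2.2]
  · rintro ⟨c, hc, hbelow⟩
    refine ⟨A * c ^ 2, B * (‖V‖ ^ 2 + 1), by positivity, by positivity, fun f => ?_⟩
    obtain ⟨hsum, hlower, hupper⟩ := hbounds (adjoint V f)
    have hadj_le : ‖adjoint V f‖ ≤ ‖V‖ * ‖f‖ := by
      simpa only [LinearIsometryEquiv.norm_map] using (adjoint V).le_opNorm f
    rw [hcoeff]
    refine ⟨hsum, le_trans ?_ hlower, hupper.trans ?_⟩
    · calc A * c ^ 2 * ‖f‖ ^ 2 = A * (c * ‖f‖) ^ 2 := by ring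
        _ ≤ A * ‖adjoint V f‖ ^ 2 := by gcongr; exact hbelow f
    · calc B * ‖adjoint V f‖ ^ 2 ≤ B * (‖V‖ * ‖f‖) ^ 2 := by gcongr
        _ ≤ B * (‖V‖ ^ 2 + 1) * ‖f‖ ^ 2 := by nlinarith [sq_nonneg ‖f‖]

end

/-- For a frame `(gᵢ)` and a bounded operator `V`, the sequence `(V gᵢ)` is a frame
iff `V` is surjective. -/
theorem stmt_15 (H : Type*) [NormedAddCommGroup H] [InnerProductSpace ℝ H] [CompleteSpace H]
    (g : ℕ → H)
    (hframe : ∃ A B : ℝ, 0 < A ∧ 0 < B ∧ ∀ f : H,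
      Summable (fun i => ⟪f, g i⟫ ^ 2) ∧
      A * ‖f‖ ^ 2 ≤ ∑' i, ⟪f, g i⟫ ^ 2 ∧ ∑' i, ⟪f, g i⟫ ^ 2 ≤ B * ‖f‖ ^ 2)
    (V : H →L[ℝ] H) :
    (∃ A B : ℝ, 0 < A ∧ 0 < B ∧ ∀ f : H,
      Summable (fun i => ⟪f, V (g i)⟫ ^ 2) ∧
      A * ‖f‖ ^ 2 ≤ ∑' i, ⟪f, V (g i)⟫ ^ 2 ∧ ∑' i, ⟪f, V (g i)⟫ ^ 2 ≤ B * ‖f‖ ^ 2) ↔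
    Function.Surjective V :=
  (IsFrame.comp_iff hframe V).trans (V.surjective_iff_exists_mul_norm_le_norm_adjoint).symm
end
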